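/- Let $0 < \gamma < 1$ and let $(h_i)_{i=0}^L$ be positive reals with $h_i = \gamma^i$. Suppose $(u_i)_{i=0}^L$ and $(v_j)_{j=0}^L$ are elements of a real inner product space with bilinear form $a$, and suppose there is $C > 0$ such that for all $0 \le i < j \le L$, $|a(u_i, v_j)| \le C\, \gamma^{(j-i)/2}\, \|u_i\|_A\, h_j^{-1} \|v_j\|_0$, where $\|u\|_A^2 = a(u,u)$ and $\|\cdot\|_0$ is some norm. Then $\left|\sum_{i=0}^L \sum_{j=i+1}^L a(u_i, v_j)\right| \le \frac{2C}{1-\sqrt{\gamma}} \left(\sum_{i=0}^L \|u_i\|_A^2\right)^{1/2} \left(\sum_{j=0}^L h_j^{-2} \|v_j\|_0^2\right)^{1/2}$. -/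

import Mathlib

/-!
Bound each pairing by `C r^(j-i) x_i y_j` with `r = √γ`, `x_i = ‖u_i‖_A` and
`y_j = h_j⁻¹ ‖v_j‖_0`. The strictly upper triangular kernel `r^(j-i)` has all row and column
sums at most `∑ₖ rᵏ = (1 - r)⁻¹`, so by the Schur test (Cauchy–Schwarz after splitting the
kernel as `√K · √K`) it is bounded by `(1 - r)⁻¹` as a bilinear form on `ℓ²`.
-/

open Finset

theorem Finset.sum_sum_mul_abs_mul_abs_le_of_row_col_sum_le {ι κ : Type*}
    (s : Finset ι) (t : Finset κ) (K : ι → κ → ℝ) (hK : ∀ i j, 0 ≤ K i j) {A B : ℝ}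
    (hrow : ∀ i ∈ s, ∑ j ∈ t, K i j ≤ A) (hcol : ∀ j ∈ t, ∑ i ∈ s, K i j ≤ B)
    (x : ι → ℝ) (y : κ → ℝ) :
    ∑ i ∈ s, ∑ j ∈ t, K i j * |x i| * |y j| ≤
      √A * √B * √(∑ i ∈ s, x i ^ 2) * √(∑ j ∈ t, y j ^ 2) := by
  have hsplit : ∀ i j, K i j * |x i| * |y j| = √(K i j * x i ^ 2) * √(K i j * y j ^ 2) := by
    intro i j
    rw [Real.sqrt_mul (hK i j), Real.sqrt_mul (hK i j), Real.sqrt_sq_eq_abs,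
      Real.sqrt_sq_eq_abs, mul_mul_mul_comm, Real.mul_self_sqrt (hK i j), mul_assoc]
  have hx : ∑ p ∈ s ×ˢ t, K p.1 p.2 * x p.1 ^ 2 ≤ A * ∑ i ∈ s, x i ^ 2 := by
    rw [sum_product, mul_sum]
    refine sum_le_sum fun i hi => ?_
    dsimp only
    rw [← sum_mul]
    exact mul_le_mul_of_nonneg_right (hrow i hi) (sq_nonneg _)
  have hy : ∑ p ∈ s ×ˢ t, K p.1 p.2 * y p.2 ^ 2 ≤ B * ∑ j ∈ t, y j ^ 2 := by
    rw [sum_product_right, mul_sum]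
    refine sum_le_sum fun j hj => ?_
    dsimp only
    rw [← sum_mul]
    exact mul_le_mul_of_nonneg_right (hcol j hj) (sq_nonneg _)
  calc ∑ i ∈ s, ∑ j ∈ t, K i j * |x i| * |y j|
      = ∑ p ∈ s ×ˢ t, √(K p.1 p.2 * x p.1 ^ 2) * √(K p.1 p.2 * y p.2 ^ 2) := by
        simp only [sum_product, hsplit]
    _ ≤ √(∑ p ∈ s ×ˢ t, K p.1 p.2 * x p.1 ^ 2) * √(∑ p ∈ s ×ˢ t, K p.1 p.2 * y p.2 ^ 2) :=
        Real.sum_sqrt_mul_sqrt_le _ (fun p => by have := hK p.1 p.2; positivity)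
          (fun p => by have := hK p.1 p.2; positivity)
    _ ≤ √(A * ∑ i ∈ s, x i ^ 2) * √(B * ∑ j ∈ t, y j ^ 2) := by gcongr
    _ = √A * √B * √(∑ i ∈ s, x i ^ 2) * √(∑ j ∈ t, y j ^ 2) := by
        rw [Real.sqrt_mul' _ (sum_nonneg fun _ _ => sq_nonneg _),
          Real.sqrt_mul' _ (sum_nonneg fun _ _ => sq_nonneg _)]
        ring

theorem sum_pow_le_inv_one_sub_of_injOn {r : ℝ} (h0 : 0 ≤ r) (h1 : r < 1) {s : Finset ℕ}
    {g : ℕ → ℕ} (hg : Set.InjOn g s) : ∑ j ∈ s, r ^ g j ≤ (1 - r)⁻¹ := by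
  rw [← sum_image hg, ← tsum_geometric_of_lt_one h0 h1]
  exact (summable_geometric_of_lt_one h0 h1).sum_le_tsum _ fun k _ => pow_nonneg h0 k

section UpperTriangularGeometricKernel

variable {r : ℝ} (h0 : 0 ≤ r) (h1 : r < 1)
include h0 h1

theorem sum_ite_lt_pow_sub_le_right (i : ℕ) (s : Finset ℕ) :
    ∑ j ∈ s, (if i < j then r ^ (j - i) else 0) ≤ (1 - r)⁻¹ := by
  rw [← sum_filter]
  exact sum_pow_le_inv_one_sub_of_injOn h0 h1 fun j hj k hk hjk => by
    simp only [coe_filter, Set.mem_ofPred_eq] at hj hk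
    omega

theorem sum_ite_lt_pow_sub_le_left (j : ℕ) (s : Finset ℕ) :
    ∑ i ∈ s, (if i < j then r ^ (j - i) else 0) ≤ (1 - r)⁻¹ := by
  rw [← sum_filter]
  exact sum_pow_le_inv_one_sub_of_injOn h0 h1 fun i hi k hk hik => by
    simp only [coe_filter, Set.mem_ofPred_eq] at hi hk
    omega

theorem sum_range_sum_Icc_pow_sub_mul_abs_le (L : ℕ) (x y : ℕ → ℝ) :
    ∑ i ∈ range (L + 1), ∑ j ∈ Icc (i + 1) L, r ^ (j - i) * |x i| * |y j| ≤
      (1 - r)⁻¹ * √(∑ i ∈ range (L + 1), x i ^ 2) * √(∑ j ∈ range (L + 1), y j ^ 2) := by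
  have hIcc : ∀ i, Icc (i + 1) L = (range (L + 1)).filter (i < ·) := by
    intro i; ext j; simp only [mem_Icc, mem_filter, mem_range]; omega
  have hkernel : ∀ i j, (if i < j then r ^ (j - i) * |x i| * |y j| else 0) =
      (if i < j then r ^ (j - i) else 0) * |x i| * |y j| := by
    intro i j; split_ifs <;> simp
  simp only [hIcc, sum_filter, hkernel]
  refine (sum_sum_mul_abs_mul_abs_le_of_row_col_sum_le _ _ _ (fun i j => ?_)
    (fun i _ => sum_ite_lt_pow_sub_le_right h0 h1 i _)
    (fun j _ => sum_ite_lt_pow_sub_le_left h0 h1 j _) x y).trans_eq ?_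
  · split_ifs <;> positivity
  · rw [Real.mul_self_sqrt (inv_nonneg.2 (by linarith))]

end UpperTriangularGeometricKernel

theorem stmt_9_general {V : Type*} [AddCommGroup V] [Module ℝ V]
    (L : ℕ) (γ C : ℝ) (hγ1 : γ < 1) (hC : 0 < C)
    (a : V →ₗ[ℝ] V →ₗ[ℝ] ℝ) (hpsd : ∀ w, 0 ≤ a w w)
    (norm0 : V → ℝ)
    (u v : ℕ → V)
    (hpair : ∀ i j, i < j → j ≤ L →
      |a (u i) (v j)| ≤ C * Real.sqrt γ ^ (j - i) * Real.sqrt (a (u i) (u i)) *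
        ((γ ^ j)⁻¹ * norm0 (v j))) :
    |∑ i ∈ Finset.range (L + 1), ∑ j ∈ Finset.Icc (i + 1) L, a (u i) (v j)| ≤
      (2 * C / (1 - Real.sqrt γ)) *
        Real.sqrt (∑ i ∈ Finset.range (L + 1), a (u i) (u i)) *
        Real.sqrt (∑ j ∈ Finset.range (L + 1), ((γ ^ j)⁻¹) ^ 2 * norm0 (v j) ^ 2) := by
  set r := √γ
  set x : ℕ → ℝ := fun i => √(a (u i) (u i))
  set y : ℕ → ℝ := fun j => (γ ^ j)⁻¹ * norm0 (v j)
  have hr0 : 0 ≤ r := Real.sqrt_nonneg γ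
  have hr1 : r < 1 := (Real.sqrt_lt' one_pos).2 (by rwa [one_pow])
  have hpair' : ∀ i ∈ range (L + 1), ∀ j ∈ Icc (i + 1) L,
      |a (u i) (v j)| ≤ C * (r ^ (j - i) * |x i| * |y j|) := fun i _ j hj => by
    rw [mem_Icc] at hj
    calc |a (u i) (v j)| ≤ C * r ^ (j - i) * (x i * y j) := by
          rw [← mul_assoc]; exact hpair i j (by omega) hj.2
      _ ≤ C * r ^ (j - i) * |x i * y j| := by gcongr; exact le_abs_self _
      _ = C * (r ^ (j - i) * |x i| * |y j|) := by rw [abs_mul]; ring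
  have hx : ∑ i ∈ range (L + 1), x i ^ 2 = ∑ i ∈ range (L + 1), a (u i) (u i) :=
    sum_congr rfl fun i _ => Real.sq_sqrt (hpsd _)
  have hy : ∑ j ∈ range (L + 1), y j ^ 2 =
      ∑ j ∈ range (L + 1), ((γ ^ j)⁻¹) ^ 2 * norm0 (v j) ^ 2 :=
    sum_congr rfl fun j _ => mul_pow _ _ _
  calc |∑ i ∈ range (L + 1), ∑ j ∈ Icc (i + 1) L, a (u i) (v j)|
      ≤ C * ∑ i ∈ range (L + 1), ∑ j ∈ Icc (i + 1) L, r ^ (j - i) * |x i| * |y j| := by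
        simp only [mul_sum]
        exact (abs_sum_le_sum_abs _ _).trans <| sum_le_sum fun i hi =>
          (abs_sum_le_sum_abs _ _).trans <| sum_le_sum (hpair' i hi)
    _ ≤ C * ((1 - r)⁻¹ * √(∑ i ∈ range (L + 1), x i ^ 2) * √(∑ j ∈ range (L + 1), y j ^ 2)) :=
        mul_le_mul_of_nonneg_left (sum_range_sum_Icc_pow_sub_mul_abs_le hr0 hr1 L x y) hC.le
    _ = C * (1 - r)⁻¹ * √(∑ i ∈ range (L + 1), a (u i) (u i)) *
          √(∑ j ∈ range (L + 1), ((γ ^ j)⁻¹) ^ 2 * norm0 (v j) ^ 2) := by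
        rw [hx, hy]; ring
    _ ≤ _ := by
        have : 0 ≤ C * (1 - r)⁻¹ := mul_nonneg hC.le (inv_nonneg.2 (by linarith))
        gcongr
        exact (le_mul_of_one_le_left this one_le_two).trans_eq (by ring)

theorem stmt_9 {V : Type*} [AddCommGroup V] [Module ℝ V]
    (L : ℕ) (γ C : ℝ) (hγ0 : 0 < γ) (hγ1 : γ < 1) (hC : 0 < C)
    (a : V →ₗ[ℝ] V →ₗ[ℝ] ℝ) (hpsd : ∀ w, 0 ≤ a w w)
    (norm0 : V → ℝ) (hnorm0 : ∀ w, 0 ≤ norm0 w)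
    (u v : ℕ → V)
    (hpair : ∀ i j, i < j → j ≤ L →
      |a (u i) (v j)| ≤ C * Real.sqrt γ ^ (j - i) * Real.sqrt (a (u i) (u i)) *
        ((γ ^ j)⁻¹ * norm0 (v j))) :
    |∑ i ∈ Finset.range (L + 1), ∑ j ∈ Finset.Icc (i + 1) L, a (u i) (v j)| ≤
      (2 * C / (1 - Real.sqrt γ)) *
        Real.sqrt (∑ i ∈ Finset.range (L + 1), a (u i) (u i)) *
        Real.sqrt (∑ j ∈ Finset.range (L + 1), ((γ ^ j)⁻¹) ^ 2 * norm0 (v j) ^ 2) :=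
  stmt_9_general L γ C hγ1 hC a hpsd norm0 u v hpair
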